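/- arXiv:2210.05994 — 7 statements merged into one kernel-verified Lean document; each statement's English description precedes it below -/
import Mathlib

section
/- Let n ≥ 1 and let F_1, …, F_n : ℝ^d → ℝ^d be operators with average F = (1/n)∑_{i=1}^n F_i. Suppose each F_i is ℓ-cocoercive, F is μ-strongly monotone, and the stepsize satisfies 0 < γ ≤ 1/ℓ. Then the SARAH inner-loop trajectory satisfies 𝔼[‖v^K‖²] ≤ (1 − γμ)^K · ‖F(z⁰)‖². -/
/-!
Write `D_i = F_i(z^{k+1}) - F_i(z^k)`, so that `v^{k+1} = D_i + v^k` and the mean of the `D_i`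
is `F(z^{k+1}) - F(z^k)`, with `z^{k+1} - z^k = -γ v^k`. Averaged over the fresh index `i`,
cocoercivity of every `F_i` together with `γℓ ≤ 1` bounds the mean of `‖D_i‖²` by
`-⟨F(z^{k+1}) - F(z^k), v^k⟩`, which eats half of the cross term, and strong monotonicity of `F`
bounds the remaining `⟨F(z^{k+1}) - F(z^k), v^k⟩` by `-γμ‖v^k‖²`. So the mean of `‖v^{k+1}‖²`
over the last index is at most `(1 - γμ)‖v^k‖²`, and induction over the `K` indices finishes.
-/

open Finset

noncomputable section

/-- An operator `G : ℝ^d → ℝ^d` is `ℓ`-cocoercive: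
`‖G(u) - G(v)‖² ≤ ℓ ⟨G(u) - G(v), u - v⟩` for all `u, v`. -/
def Cocoercive {d : ℕ} (ℓ : ℝ)
    (G : EuclideanSpace ℝ (Fin d) → EuclideanSpace ℝ (Fin d)) : Prop :=
  ∀ u v : EuclideanSpace ℝ (Fin d),
    ‖G u - G v‖ ^ 2 ≤ ℓ * (inner ℝ (G u - G v) (u - v) : ℝ)

/-- An operator `G : ℝ^d → ℝ^d` is `μ`-strongly monotone:
`⟨G(u) - G(v), u - v⟩ ≥ μ ‖u - v‖²` for all `u, v`. -/
def StronglyMonotone {d : ℕ} (μ : ℝ)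
    (G : EuclideanSpace ℝ (Fin d) → EuclideanSpace ℝ (Fin d)) : Prop :=
  ∀ u v : EuclideanSpace ℝ (Fin d),
    μ * ‖u - v‖ ^ 2 ≤ (inner ℝ (G u - G v) (u - v) : ℝ)

/-- The average operator `F = (1/n) ∑_{i=1}^n F_i`. -/
def opAvg {d n : ℕ} (F : Fin n → EuclideanSpace ℝ (Fin d) → EuclideanSpace ℝ (Fin d)) :
    EuclideanSpace ℝ (Fin d) → EuclideanSpace ℝ (Fin d) :=
  fun z => (n : ℝ)⁻¹ • ∑ i, F i z

/-- One step of the SARAH recursion: from `(z, v)` and index `i`, go to `(z', v')`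
with `z' = z - γ v` and `v' = F_i(z') - F_i(z) + v`. -/
def sarahStep {d n : ℕ} (γ : ℝ)
    (F : Fin n → EuclideanSpace ℝ (Fin d) → EuclideanSpace ℝ (Fin d)) (i : Fin n)
    (p : EuclideanSpace ℝ (Fin d) × EuclideanSpace ℝ (Fin d)) :
    EuclideanSpace ℝ (Fin d) × EuclideanSpace ℝ (Fin d) :=
  (p.1 - γ • p.2, F i (p.1 - γ • p.2) - F i p.1 + p.2)

/-- Run SARAH steps along a list of indices. -/
def sarahRun {d n : ℕ} (γ : ℝ)
    (F : Fin n → EuclideanSpace ℝ (Fin d) → EuclideanSpace ℝ (Fin d)) :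
    EuclideanSpace ℝ (Fin d) × EuclideanSpace ℝ (Fin d) → List (Fin n) →
      EuclideanSpace ℝ (Fin d) × EuclideanSpace ℝ (Fin d)
  | p, [] => p
  | p, i :: l => sarahRun γ F (sarahStep γ F i p) l

/-- The SARAH inner-loop trajectory `(z^k, v^k)` started at `z^0 = z0` with
`v^0 = F(z^0)`, for the index sequence `j : Fin K → Fin n` (so `i_k = j (k-1)`):
`sarahTraj γ F z0 j k = (z^k, v^k)` is obtained by performing the SARAH steps
with the first `k` indices `i_1, …, i_k`. -/
def sarahTraj {d n K : ℕ} (γ : ℝ)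
    (F : Fin n → EuclideanSpace ℝ (Fin d) → EuclideanSpace ℝ (Fin d))
    (z0 : EuclideanSpace ℝ (Fin d)) (j : Fin K → Fin n) (k : ℕ) :
    EuclideanSpace ℝ (Fin d) × EuclideanSpace ℝ (Fin d) :=
  sarahRun γ F (z0, opAvg F z0) ((List.ofFn j).take k)

section

variable {d n : ℕ} {F : Fin n → EuclideanSpace ℝ (Fin d) → EuclideanSpace ℝ (Fin d)}

lemma sum_apply_eq_smul_opAvg (hn : 1 ≤ n) (z : EuclideanSpace ℝ (Fin d)) :
    ∑ i, F i z = (n : ℝ) • opAvg F z := by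
  rw [opAvg, smul_inv_smul₀ (by positivity)]

lemma Cocoercive.inner_nonneg {ℓ : ℝ} {G : EuclideanSpace ℝ (Fin d) → EuclideanSpace ℝ (Fin d)}
    (hℓ : 0 < ℓ) (hG : Cocoercive ℓ G) (u v : EuclideanSpace ℝ (Fin d)) :
    0 ≤ (inner ℝ (G u - G v) (u - v) : ℝ) :=
  nonneg_of_mul_nonneg_right ((sq_nonneg _).trans (hG u v)) hℓ

lemma sum_norm_sq_le_of_cocoercive {ℓ : ℝ} (hco : ∀ i, Cocoercive ℓ (F i))
    (u v : EuclideanSpace ℝ (Fin d)) :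
    ∑ i, ‖F i u - F i v‖ ^ 2 ≤ ℓ * (inner ℝ (∑ i, (F i u - F i v)) (u - v) : ℝ) := by
  rw [sum_inner, mul_sum]
  exact sum_le_sum fun i _ => hco i u v

lemma StronglyMonotone.mul_norm_sq_le_sum_inner {μ : ℝ} (hsm : StronglyMonotone μ (opAvg F))
    (hn : 1 ≤ n) (u v : EuclideanSpace ℝ (Fin d)) :
    n * (μ * ‖u - v‖ ^ 2) ≤ (inner ℝ (∑ i, (F i u - F i v)) (u - v) : ℝ) := by
  rw [sum_sub_distrib, sum_apply_eq_smul_opAvg hn, sum_apply_eq_smul_opAvg hn, ← smul_sub,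
    real_inner_smul_left]
  exact mul_le_mul_of_nonneg_left (hsm u v) (Nat.cast_nonneg n)

lemma sum_norm_sarahStep_sq_le (hn : 1 ≤ n) {ℓ μ γ : ℝ} (hℓ : 0 < ℓ) (hγ0 : 0 < γ)
    (hγℓ : γ * ℓ ≤ 1) (hco : ∀ i, Cocoercive ℓ (F i)) (hsm : StronglyMonotone μ (opAvg F))
    (z v : EuclideanSpace ℝ (Fin d)) :
    ∑ i, ‖(sarahStep γ F i (z, v)).2‖ ^ 2 ≤ n * (1 - γ * μ) * ‖v‖ ^ 2 := by
  set z' := z - γ • v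
  set S := ∑ i, ‖F i z' - F i z‖ ^ 2
  set Q := (inner ℝ (∑ i, (F i z' - F i z)) v : ℝ)
  have hdz : z' - z = -(γ • v) := by simp [z']
  have hP : inner ℝ (∑ i, (F i z' - F i z)) (z' - z) = -(γ * Q) := by
    rw [hdz, inner_neg_right, real_inner_smul_right]
  have hexpand : ∑ i, ‖(sarahStep γ F i (z, v)).2‖ ^ 2 = S + 2 * Q + n * ‖v‖ ^ 2 := by
    simp only [sarahStep, norm_add_sq_real, sum_add_distrib, ← mul_sum, ← sum_inner, sum_const,
      card_univ, Fintype.card_fin, nsmul_eq_mul, S, Q]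
    rfl
  have hS : S ≤ ℓ * -(γ * Q) := hP ▸ sum_norm_sq_le_of_cocoercive hco z' z
  have hQ : n * (μ * (γ ^ 2 * ‖v‖ ^ 2)) ≤ -(γ * Q) := by
    have h := hsm.mul_norm_sq_le_sum_inner hn z' z
    rwa [hP, hdz, norm_neg, norm_smul, mul_pow, Real.norm_eq_abs, sq_abs] at h
  have hQ0 : 0 ≤ -(γ * Q) := by
    rw [← hP, sum_inner]
    exact sum_nonneg fun i _ => (hco i).inner_nonneg hℓ z' z
  -- `S ≤ -γℓ Q ≤ -Q` absorbs half of the cross term `2Q`.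
  have hSQ : S ≤ -Q := by nlinarith
  have hQμ : Q ≤ -(n * μ * γ * ‖v‖ ^ 2) := by nlinarith
  rw [hexpand]
  nlinarith

lemma sum_norm_sarahRun_sq_le {γ c : ℝ} (hc : 0 ≤ c)
    (hstep : ∀ z v, ∑ i, ‖(sarahStep γ F i (z, v)).2‖ ^ 2 ≤ c * ‖v‖ ^ 2) (K : ℕ)
    (z v : EuclideanSpace ℝ (Fin d)) :
    ∑ j : Fin K → Fin n, ‖(sarahRun γ F (z, v) (List.ofFn j)).2‖ ^ 2 ≤ c ^ K * ‖v‖ ^ 2 := by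
  induction K generalizing z v with
  | zero => simp [sarahRun]
  | succ K ih =>
    rw [← (Fin.consEquiv fun _ => Fin n).sum_comp, Fintype.sum_prod_type]
    simp only [Fin.consEquiv_apply, List.ofFn_succ, Fin.cons_zero, Fin.cons_succ, sarahRun]
    calc ∑ i, ∑ j : Fin K → Fin n,
          ‖(sarahRun γ F (sarahStep γ F i (z, v)) (List.ofFn j)).2‖ ^ 2
        ≤ ∑ i, c ^ K * ‖(sarahStep γ F i (z, v)).2‖ ^ 2 :=
          sum_le_sum fun i _ => ih _ _
      _ ≤ c ^ K * (c * ‖v‖ ^ 2) := by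
          rw [← mul_sum]
          exact mul_le_mul_of_nonneg_left (hstep z v) (pow_nonneg hc K)
      _ = c ^ (K + 1) * ‖v‖ ^ 2 := by ring

lemma sarahTraj_self {K : ℕ} (γ : ℝ) (z0 : EuclideanSpace ℝ (Fin d)) (j : Fin K → Fin n) :
    sarahTraj γ F z0 j K = sarahRun γ F (z0, opAvg F z0) (List.ofFn j) := by
  rw [sarahTraj, List.take_of_length_le (by simp)]

end

theorem sarah_vK_bound_general {d n : ℕ} (hn : 1 ≤ n) (ℓ μ : ℝ) (hℓ : 0 < ℓ)
    (F : Fin n → EuclideanSpace ℝ (Fin d) → EuclideanSpace ℝ (Fin d))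
    (hco : ∀ i, Cocoercive ℓ (F i)) (hsm : StronglyMonotone μ (opAvg F))
    (γ : ℝ) (hγ0 : 0 < γ) (hγ : γ ≤ 1 / ℓ)
    (K : ℕ) (z0 : EuclideanSpace ℝ (Fin d)) :
    (∑ j : Fin K → Fin n, ‖(sarahTraj γ F z0 j K).2‖ ^ 2) / (n : ℝ) ^ K
      ≤ (1 - γ * μ) ^ K * ‖opAvg F z0‖ ^ 2 := by
  have hγℓ : γ * ℓ ≤ 1 := (le_div_iff₀ hℓ).1 hγ
  have hstep := sum_norm_sarahStep_sq_le hn hℓ hγ0 hγℓ hco hsm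
  rcases subsingleton_or_nontrivial (EuclideanSpace ℝ (Fin d)) with hE | hE
  · simp [norm_of_subsingleton]
  have hn0 : (0 : ℝ) < n := by exact_mod_cast hn
  -- The step bound at any `v ≠ 0` forces the contraction factor to be nonnegative.
  have hc : 0 ≤ n * (1 - γ * μ) := by
    obtain ⟨v, hv⟩ := exists_ne (0 : EuclideanSpace ℝ (Fin d))
    have h := (sum_nonneg fun i _ => sq_nonneg _).trans (hstep 0 v)
    exact nonneg_of_mul_nonneg_left h (by positivity)
  rw [div_le_iff₀ (by positivity)]
  calc ∑ j : Fin K → Fin n, ‖(sarahTraj γ F z0 j K).2‖ ^ 2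
      = ∑ j : Fin K → Fin n, ‖(sarahRun γ F (z0, opAvg F z0) (List.ofFn j)).2‖ ^ 2 := by
        simp only [sarahTraj_self]
    _ ≤ (n * (1 - γ * μ)) ^ K * ‖opAvg F z0‖ ^ 2 := sum_norm_sarahRun_sq_le hc hstep K _ _
    _ = (1 - γ * μ) ^ K * ‖opAvg F z0‖ ^ 2 * n ^ K := by rw [mul_pow]; ring

/-- **Lemma 1 (final form).** If each `F_i` is `ℓ`-cocoercive, the average `F` is
`μ`-strongly monotone and `0 < γ ≤ 1/ℓ`, then the SARAH inner loop satisfies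
`𝔼[‖v^K‖²] ≤ (1 - γμ)^K ‖F(z^0)‖²`, where the expectation is the uniform average
over all `n^K` index sequences. -/
theorem sarah_vK_bound {d n : ℕ} (hn : 1 ≤ n) (ℓ μ : ℝ) (hℓ : 0 < ℓ) (hμ : 0 < μ)
    (F : Fin n → EuclideanSpace ℝ (Fin d) → EuclideanSpace ℝ (Fin d))
    (hco : ∀ i, Cocoercive ℓ (F i)) (hsm : StronglyMonotone μ (opAvg F))
    (γ : ℝ) (hγ0 : 0 < γ) (hγ : γ ≤ 1 / ℓ)
    (K : ℕ) (hK : 1 ≤ K) (z0 : EuclideanSpace ℝ (Fin d)) :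
    (∑ j : Fin K → Fin n, ‖(sarahTraj γ F z0 j K).2‖ ^ 2) / (n : ℝ) ^ K
      ≤ (1 - γ * μ) ^ K * ‖opAvg F z0‖ ^ 2 :=
  sarah_vK_bound_general hn ℓ μ hℓ F hco hsm γ hγ0 hγ K z0

end
end

section
/- Let n ≥ 1 and let F_1, …, F_n : ℝ^d → ℝ^d be operators with average F = (1/n)∑_{i=1}^n F_i. Suppose each F_i is ℓ-cocoercive and the stepsize satisfies 0 < γ with γℓ < 2. Then the SARAH inner-loop trajectory satisfies 𝔼[‖F(z^K) − v^K‖²] ≤ (γℓ/(2 − γℓ)) · ‖F(z⁰)‖². -/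
open Finset

noncomputable section

/-!
Along the trajectory the Lyapunov function `Φ(z, v) = ‖F(z) - v‖² + c ‖v‖²`, with
`c = γℓ/(2 - γℓ)`, does not increase in expectation over the next index `i`. Writing
`Δᵢ = Fᵢ(z - γv) - Fᵢ(z)`, the new error is `F(z) - v + (𝔼Δ - Δᵢ)`, whose expected square is at
most `‖F(z) - v‖² + 𝔼‖Δᵢ‖²` since a variance is at most the second moment, and cocoercivity of
`Fᵢ` gives `‖Δᵢ‖² + c ‖Δᵢ + v‖² ≤ c ‖v‖²`. As `Φ(z⁰, v⁰) = c ‖F(z⁰)‖²` and `Φ` dominates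
`‖F(z) - v‖²`, the bound follows.
-/

theorem Cocoercive.norm_sq_add_mul_norm_sq_le {d : ℕ} {ℓ γ : ℝ}
    {G : EuclideanSpace ℝ (Fin d) → EuclideanSpace ℝ (Fin d)} (hG : Cocoercive ℓ G)
    (hγ : γ * ℓ < 2) (z v : EuclideanSpace ℝ (Fin d)) :
    ‖G (z - γ • v) - G z‖ ^ 2 + γ * ℓ / (2 - γ * ℓ) * ‖G (z - γ • v) - G z + v‖ ^ 2
      ≤ γ * ℓ / (2 - γ * ℓ) * ‖v‖ ^ 2 := by
  have hcoco := hG (z - γ • v) z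
  rw [sub_sub_cancel_left, inner_neg_right, real_inner_smul_right] at hcoco
  set D := G (z - γ • v) - G z
  set c := γ * ℓ / (2 - γ * ℓ)
  -- multiply cocoercivity by `1 + c`, using `(1 + c) γℓ = 2c`
  have hc : c * (2 - γ * ℓ) = γ * ℓ := div_mul_cancel₀ _ (by linarith)
  nlinarith [norm_add_sq_real D v, sq_nonneg ‖D‖]

theorem sum_norm_add_mean_sub_sq_le {E ι : Type*} [NormedAddCommGroup E] [InnerProductSpace ℝ E]
    [Fintype ι] (x : E) (y : ι → E) :
    ∑ i, ‖x + (Fintype.card ι : ℝ)⁻¹ • ∑ j, y j - y i‖ ^ 2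
      ≤ Fintype.card ι * ‖x‖ ^ 2 + ∑ i, ‖y i‖ ^ 2 := by
  set N := (Fintype.card ι : ℝ)
  set m := N⁻¹ • ∑ j, y j
  have hm : N • m = ∑ j, y j := by
    rcases isEmpty_or_nonempty ι with hι | hι
    · simp [N]
    · exact smul_inv_smul₀ (by positivity) _
  calc ∑ i, ‖x + m - y i‖ ^ 2
      = ∑ i, (‖x + m‖ ^ 2 - 2 * inner ℝ (x + m) (y i) + ‖y i‖ ^ 2) :=
        sum_congr rfl fun i _ => norm_sub_sq_real _ _
    _ = N * (‖x‖ ^ 2 - ‖m‖ ^ 2) + ∑ i, ‖y i‖ ^ 2 := by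
        rw [sum_add_distrib, sum_sub_distrib, sum_const, ← mul_sum, ← inner_sum, ← hm,
          real_inner_smul_right, card_univ, nsmul_eq_mul, norm_add_sq_real, inner_add_left,
          real_inner_self_eq_norm_sq]
        ring
    _ ≤ N * ‖x‖ ^ 2 + ∑ i, ‖y i‖ ^ 2 := by
        have : 0 ≤ N * ‖m‖ ^ 2 := by positivity
        linarith

theorem sum_foldl_ofFn_le_card_pow_mul {α ι : Type*} [Fintype ι] (step : ι → α → α) (φ : α → ℝ)
    (hφ : ∀ p, ∑ i, φ (step i p) ≤ Fintype.card ι * φ p) (k : ℕ) (p : α) :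
    ∑ j : Fin k → ι, φ ((List.ofFn j).foldl (fun q i => step i q) p)
      ≤ (Fintype.card ι : ℝ) ^ k * φ p := by
  induction k generalizing p with
  | zero => simp
  | succ k ih =>
    calc ∑ j : Fin (k + 1) → ι, φ ((List.ofFn j).foldl (fun q i => step i q) p)
        = ∑ i, ∑ j : Fin k → ι, φ ((List.ofFn j).foldl (fun q i => step i q) (step i p)) := by
          rw [← (Fin.consEquiv fun _ => ι).sum_comp, Fintype.sum_prod_type]
          simp [List.ofFn_succ]
      _ ≤ ∑ i, (Fintype.card ι : ℝ) ^ k * φ (step i p) := sum_le_sum fun i _ => ih _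
      _ ≤ (Fintype.card ι : ℝ) ^ (k + 1) * φ p := by
          rw [← mul_sum, pow_succ, mul_assoc]
          exact mul_le_mul_of_nonneg_left (hφ p) (by positivity)

theorem sarahRun_eq_foldl {d n : ℕ} (γ : ℝ)
    (F : Fin n → EuclideanSpace ℝ (Fin d) → EuclideanSpace ℝ (Fin d))
    (p : EuclideanSpace ℝ (Fin d) × EuclideanSpace ℝ (Fin d)) (l : List (Fin n)) :
    sarahRun γ F p l = l.foldl (fun q i => sarahStep γ F i q) p := by
  induction l generalizing p with
  | nil => rfl
  | cons i l ih => exact ih _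

def sarahLyapunov {d n : ℕ} (c : ℝ)
    (F : Fin n → EuclideanSpace ℝ (Fin d) → EuclideanSpace ℝ (Fin d))
    (p : EuclideanSpace ℝ (Fin d) × EuclideanSpace ℝ (Fin d)) : ℝ :=
  ‖opAvg F p.1 - p.2‖ ^ 2 + c * ‖p.2‖ ^ 2

theorem sum_sarahLyapunov_sarahStep_le {d n : ℕ} {c γ : ℝ}
    {F : Fin n → EuclideanSpace ℝ (Fin d) → EuclideanSpace ℝ (Fin d)}
    (hF : ∀ i z v, ‖F i (z - γ • v) - F i z‖ ^ 2 + c * ‖F i (z - γ • v) - F i z + v‖ ^ 2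
      ≤ c * ‖v‖ ^ 2)
    (p : EuclideanSpace ℝ (Fin d) × EuclideanSpace ℝ (Fin d)) :
    ∑ i, sarahLyapunov c F (sarahStep γ F i p) ≤ n * sarahLyapunov c F p := by
  obtain ⟨z, v⟩ := p
  set y := fun i => F i (z - γ • v) - F i z
  have hmean : opAvg F (z - γ • v) - opAvg F z = (n : ℝ)⁻¹ • ∑ i, y i := by
    simp only [y, opAvg, sum_sub_distrib, smul_sub]
  have herr : ∀ i, opAvg F (z - γ • v) - (y i + v)
      = (opAvg F z - v) + (n : ℝ)⁻¹ • ∑ j, y j - y i := by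
    intro i
    rw [← hmean]
    abel
  have hvar := sum_norm_add_mean_sub_sq_le (opAvg F z - v) y
  rw [Fintype.card_fin] at hvar
  calc ∑ i, sarahLyapunov c F (sarahStep γ F i (z, v))
      = ∑ i, ‖opAvg F (z - γ • v) - (y i + v)‖ ^ 2 + ∑ i, c * ‖y i + v‖ ^ 2 := sum_add_distrib
    _ = ∑ i, ‖(opAvg F z - v) + (n : ℝ)⁻¹ • ∑ j, y j - y i‖ ^ 2
          + ∑ i, c * ‖y i + v‖ ^ 2 := by simp only [herr]
    _ ≤ n * ‖opAvg F z - v‖ ^ 2 + ∑ i, (‖y i‖ ^ 2 + c * ‖y i + v‖ ^ 2) := by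
        rw [sum_add_distrib]
        linarith
    _ ≤ n * ‖opAvg F z - v‖ ^ 2 + ∑ _i : Fin n, c * ‖v‖ ^ 2 := by
        gcongr with i
        exact hF i z v
    _ = n * sarahLyapunov c F (z, v) := by
        simp only [sarahLyapunov, sum_const, card_univ, Fintype.card_fin, nsmul_eq_mul]
        ring

theorem sarah_FzK_minus_vK_bound_general {d n : ℕ} (ℓ : ℝ) (hℓ : 0 < ℓ)
    (F : Fin n → EuclideanSpace ℝ (Fin d) → EuclideanSpace ℝ (Fin d))
    (hco : ∀ i, Cocoercive ℓ (F i))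
    (γ : ℝ) (hγ0 : 0 < γ) (hγ : γ * ℓ < 2)
    (K : ℕ) (z0 : EuclideanSpace ℝ (Fin d)) :
    (∑ j : Fin K → Fin n,
        ‖opAvg F (sarahTraj γ F z0 j K).1 - (sarahTraj γ F z0 j K).2‖ ^ 2) / (n : ℝ) ^ K
      ≤ γ * ℓ / (2 - γ * ℓ) * ‖opAvg F z0‖ ^ 2 := by
  set c := γ * ℓ / (2 - γ * ℓ)
  have hc : 0 ≤ c := div_nonneg (by positivity) (by linarith)
  have hΦ := sum_foldl_ofFn_le_card_pow_mul (fun i p => sarahStep γ F i p) (sarahLyapunov c F)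
    (by simpa using
      sum_sarahLyapunov_sarahStep_le fun i => (hco i).norm_sq_add_mul_norm_sq_le hγ)
    K (z0, opAvg F z0)
  rw [Fintype.card_fin] at hΦ
  refine div_le_of_le_mul₀ (by positivity) (by positivity) ?_
  calc ∑ j : Fin K → Fin n,
        ‖opAvg F (sarahTraj γ F z0 j K).1 - (sarahTraj γ F z0 j K).2‖ ^ 2
      ≤ ∑ j : Fin K → Fin n, sarahLyapunov c F (sarahTraj γ F z0 j K) :=
        sum_le_sum fun j _ => le_add_of_nonneg_right (by positivity)
    _ = ∑ j : Fin K → Fin n, sarahLyapunov c F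
          ((List.ofFn j).foldl (fun p i => sarahStep γ F i p) (z0, opAvg F z0)) := by
        simp only [sarahTraj, List.take_of_length_le (List.length_ofFn ..).le,
          sarahRun_eq_foldl]
    _ ≤ n ^ K * sarahLyapunov c F (z0, opAvg F z0) := hΦ
    _ = c * ‖opAvg F z0‖ ^ 2 * n ^ K := by
        simp only [sarahLyapunov, sub_self, norm_zero]
        ring

/-- **Lemma 2.** If each `F_i` is `ℓ`-cocoercive and `0 < γ` with `γℓ < 2`, then the
SARAH inner loop satisfies `𝔼[‖F(z^K) - v^K‖²] ≤ (γℓ/(2 - γℓ)) ‖F(z^0)‖²`, where the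
expectation is the uniform average over all `n^K` index sequences. -/
theorem sarah_FzK_minus_vK_bound {d n : ℕ} (hn : 1 ≤ n) (ℓ : ℝ) (hℓ : 0 < ℓ)
    (F : Fin n → EuclideanSpace ℝ (Fin d) → EuclideanSpace ℝ (Fin d))
    (hco : ∀ i, Cocoercive ℓ (F i))
    (γ : ℝ) (hγ0 : 0 < γ) (hγ : γ * ℓ < 2)
    (K : ℕ) (hK : 1 ≤ K) (z0 : EuclideanSpace ℝ (Fin d)) :
    (∑ j : Fin K → Fin n,
        ‖opAvg F (sarahTraj γ F z0 j K).1 - (sarahTraj γ F z0 j K).2‖ ^ 2) / (n : ℝ) ^ K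
      ≤ γ * ℓ / (2 - γ * ℓ) * ‖opAvg F z0‖ ^ 2 :=
  sarah_FzK_minus_vK_bound_general ℓ hℓ F hco γ hγ0 hγ K z0

end
end

section
/- Let n ≥ 1 and let F_1, …, F_n : ℝ^d → ℝ^d be operators with average F = (1/n)∑_{i=1}^n F_i. Suppose each F_i is ℓ-cocoercive and F is μ-strongly monotone. Fix z, w ∈ ℝ^d and a stepsize 0 < γ ≤ 1/ℓ, set z' = z − γw, and for each i ∈ {1, …, n} set v_i = F_i(z') − F_i(z) + w. Then (1/n)∑_{i=1}^n ‖v_i‖² ≤ (1 − γμ) · ‖w‖². -/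
/-!
Write `g_i = F_i(z') - F_i(z)`. Cocoercivity along the step `z' - z = -γ w`, together with
`γ ℓ ≤ 1`, gives `‖g_i‖² ≤ -⟪g_i, w⟫`, hence `‖g_i + w‖² ≤ ⟪g_i, w⟫ + ‖w‖²`.
Averaging over `i` turns `⟪g_i, w⟫` into `⟪F(z') - F(z), w⟫`, which strong monotonicity
bounds by `-γ μ ‖w‖²`.
-/

open Finset

noncomputable section

open scoped InnerProductSpace

theorem norm_add_sq_le_inner_add_norm_sq {E : Type*}
    [NormedAddCommGroup E] [InnerProductSpace ℝ E] {g w : E} {t : ℝ} (ht0 : 0 < t) (ht1 : t ≤ 1)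
    (h : ‖g‖ ^ 2 ≤ -t * ⟪g, w⟫_ℝ) : ‖g + w‖ ^ 2 ≤ ⟪g, w⟫_ℝ + ‖w‖ ^ 2 := by
  have hinner : ⟪g, w⟫_ℝ ≤ 0 := by nlinarith [sq_nonneg ‖g‖]
  rw [norm_add_sq_real]
  nlinarith

section Step

variable {d : ℕ} {G : EuclideanSpace ℝ (Fin d) → EuclideanSpace ℝ (Fin d)}

theorem Cocoercive.norm_sq_step_le {ℓ : ℝ} (hG : Cocoercive ℓ G) (γ : ℝ)
    (z w : EuclideanSpace ℝ (Fin d)) :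
    ‖G (z - γ • w) - G z‖ ^ 2 ≤ -(ℓ * γ) * ⟪G (z - γ • w) - G z, w⟫_ℝ := by
  have h := hG (z - γ • w) z
  rw [sub_sub_cancel_left, inner_neg_right, real_inner_smul_right] at h
  linarith

theorem StronglyMonotone.inner_step_le {μ γ : ℝ} (hG : StronglyMonotone μ G) (hγ : 0 < γ)
    (z w : EuclideanSpace ℝ (Fin d)) :
    ⟪G (z - γ • w) - G z, w⟫_ℝ ≤ -(γ * μ) * ‖w‖ ^ 2 := by
  have h := hG (z - γ • w) z
  rw [sub_sub_cancel_left, inner_neg_right, real_inner_smul_right, norm_neg, norm_smul,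
    Real.norm_of_nonneg hγ.le] at h
  nlinarith

end Step

theorem opAvg_sub {d n : ℕ}
    (F : Fin n → EuclideanSpace ℝ (Fin d) → EuclideanSpace ℝ (Fin d))
    (u v : EuclideanSpace ℝ (Fin d)) :
    opAvg F u - opAvg F v = (n : ℝ)⁻¹ • ∑ i, (F i u - F i v) := by
  simp only [opAvg, ← smul_sub, ← sum_sub_distrib]

theorem sarah_one_step_contraction_general {d n : ℕ} (hn : 1 ≤ n) (ℓ μ : ℝ) (hℓ : 0 < ℓ)
    (F : Fin n → EuclideanSpace ℝ (Fin d) → EuclideanSpace ℝ (Fin d))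
    (hco : ∀ i, Cocoercive ℓ (F i)) (hsm : StronglyMonotone μ (opAvg F))
    (γ : ℝ) (hγ0 : 0 < γ) (hγ : γ ≤ 1 / ℓ)
    (z w : EuclideanSpace ℝ (Fin d)) :
    (n : ℝ)⁻¹ * ∑ i, ‖F i (z - γ • w) - F i z + w‖ ^ 2
      ≤ (1 - γ * μ) * ‖w‖ ^ 2 := by
  have hn0 : (n : ℝ) ≠ 0 := Nat.cast_ne_zero.mpr (by omega)
  have hℓγ : ℓ * γ ≤ 1 := by rwa [le_div_iff₀ hℓ, mul_comm] at hγ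
  have hstep (i : Fin n) :
      ‖F i (z - γ • w) - F i z + w‖ ^ 2 ≤ ⟪F i (z - γ • w) - F i z, w⟫_ℝ + ‖w‖ ^ 2 :=
    norm_add_sq_le_inner_add_norm_sq (by positivity) hℓγ ((hco i).norm_sq_step_le γ z w)
  have hF := hsm.inner_step_le hγ0 z w
  calc (n : ℝ)⁻¹ * ∑ i, ‖F i (z - γ • w) - F i z + w‖ ^ 2
      ≤ (n : ℝ)⁻¹ * ∑ i, (⟪F i (z - γ • w) - F i z, w⟫_ℝ + ‖w‖ ^ 2) := by
        gcongr with i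
        exact hstep i
    _ = ⟪opAvg F (z - γ • w) - opAvg F z, w⟫_ℝ + ‖w‖ ^ 2 := by
      rw [opAvg_sub, real_inner_smul_left, sum_inner, sum_add_distrib, sum_const, card_univ,
        Fintype.card_fin, nsmul_eq_mul]
      field_simp
    _ ≤ (1 - γ * μ) * ‖w‖ ^ 2 := by linarith

/-- **One-step version of Lemma 1.** If each `F_i` is `ℓ`-cocoercive, the average `F`
is `μ`-strongly monotone and `0 < γ ≤ 1/ℓ`, then one step of the SARAH recursion from
iterate `z` with direction `w` (i.e. `z' = z - γw`, `v_i = F_i(z') - F_i(z) + w`)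
satisfies `(1/n) ∑_i ‖v_i‖² ≤ (1 - γμ) ‖w‖²`. -/
theorem sarah_one_step_contraction {d n : ℕ} (hn : 1 ≤ n) (ℓ μ : ℝ) (hℓ : 0 < ℓ)
    (hμ : 0 < μ)
    (F : Fin n → EuclideanSpace ℝ (Fin d) → EuclideanSpace ℝ (Fin d))
    (hco : ∀ i, Cocoercive ℓ (F i)) (hsm : StronglyMonotone μ (opAvg F))
    (γ : ℝ) (hγ0 : 0 < γ) (hγ : γ ≤ 1 / ℓ)
    (z w : EuclideanSpace ℝ (Fin d)) :
    (n : ℝ)⁻¹ * ∑ i, ‖F i (z - γ • w) - F i z + w‖ ^ 2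
      ≤ (1 - γ * μ) * ‖w‖ ^ 2 :=
  sarah_one_step_contraction_general hn ℓ μ hℓ F hco hsm γ hγ0 hγ z w
end
end

section
/- Let n ≥ 1 and let F_1, …, F_n : ℝ^d → ℝ^d be operators with average F = (1/n)∑_{i=1}^n F_i. Suppose each F_i is ℓ-cocoercive and F is μ-strongly monotone. Fix z, w ∈ ℝ^d and a stepsize γ > 0, set z' = z − γw, and for each i ∈ {1, …, n} set v_i = F_i(z') − F_i(z) + w. Then (1/n)∑_{i=1}^n ‖v_i‖² ≤ (1 − γμ)·‖w‖² + ((γℓ − 1)/(γℓ)) · (1/n)∑_{i=1}^n ‖F_i(z') − F_i(z)‖². -/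
open Finset

noncomputable section

/-!
Write `a_i = F_i(z') - F_i(z)`, so that `‖v_i‖² = ‖a_i‖² + 2⟨a_i, w⟩ + ‖w‖²` and, since
`z' - z = -γw`, the cross terms are controlled twice: cocoercivity of each `F_i` gives
`⟨a_i, w⟩ ≤ -‖a_i‖² / (γℓ)`, and strong monotonicity of `F` gives `(1/n)∑⟨a_i, w⟩ ≤ -γμ‖w‖²`.
Each bound pays for one copy of the averaged cross term.
-/

section

variable {E : Type*} [NormedAddCommGroup E] [InnerProductSpace ℝ E]

theorem average_norm_add_sq {n : ℕ} (hn : n ≠ 0) (a : Fin n → E) (w : E) :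
    (n : ℝ)⁻¹ * ∑ i, ‖a i + w‖ ^ 2
      = (n : ℝ)⁻¹ * ∑ i, ‖a i‖ ^ 2 + 2 * ((n : ℝ)⁻¹ * ∑ i, (inner ℝ (a i) w : ℝ))
        + ‖w‖ ^ 2 := by
  simp only [norm_add_sq_real, sum_add_distrib, sum_const, card_univ, Fintype.card_fin,
    nsmul_eq_mul, ← mul_sum]
  field_simp

end

section

variable {d : ℕ}

theorem Cocoercive.inner_sub_le {ℓ : ℝ}
    {G : EuclideanSpace ℝ (Fin d) → EuclideanSpace ℝ (Fin d)}
    (hG : Cocoercive ℓ G) (hℓ : 0 < ℓ) {γ : ℝ} (hγ : 0 < γ) (z w : EuclideanSpace ℝ (Fin d)) :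
    (inner ℝ (G (z - γ • w) - G z) w : ℝ) ≤ -(γ * ℓ)⁻¹ * ‖G (z - γ • w) - G z‖ ^ 2 := by
  have h := hG (z - γ • w) z
  rw [sub_sub_cancel_left, inner_neg_right, real_inner_smul_right] at h
  rw [neg_mul, le_neg, ← div_eq_inv_mul, div_le_iff₀ (by positivity)]
  linarith

theorem StronglyMonotone.inner_sub_le {μ : ℝ}
    {G : EuclideanSpace ℝ (Fin d) → EuclideanSpace ℝ (Fin d)}
    (hG : StronglyMonotone μ G) {γ : ℝ} (hγ : 0 < γ) (z w : EuclideanSpace ℝ (Fin d)) :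
    (inner ℝ (G (z - γ • w) - G z) w : ℝ) ≤ -(γ * μ) * ‖w‖ ^ 2 := by
  have h := hG (z - γ • w) z
  rw [sub_sub_cancel_left, inner_neg_right, real_inner_smul_right, norm_neg, norm_smul,
    Real.norm_of_nonneg hγ.le] at h
  nlinarith

theorem inner_opAvg_sub {n : ℕ}
    (F : Fin n → EuclideanSpace ℝ (Fin d) → EuclideanSpace ℝ (Fin d))
    (u v w : EuclideanSpace ℝ (Fin d)) :
    (inner ℝ (opAvg F u - opAvg F v) w : ℝ)
      = (n : ℝ)⁻¹ * ∑ i, (inner ℝ (F i u - F i v) w : ℝ) := by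
  rw [opAvg, opAvg, ← smul_sub, ← sum_sub_distrib, real_inner_smul_left, sum_inner]

end

theorem sarah_one_step_estimate_general {d n : ℕ} (hn : 1 ≤ n) (ℓ μ : ℝ) (hℓ : 0 < ℓ)
    (F : Fin n → EuclideanSpace ℝ (Fin d) → EuclideanSpace ℝ (Fin d))
    (hco : ∀ i, Cocoercive ℓ (F i)) (hsm : StronglyMonotone μ (opAvg F))
    (γ : ℝ) (hγ0 : 0 < γ)
    (z w : EuclideanSpace ℝ (Fin d)) :
    (n : ℝ)⁻¹ * ∑ i, ‖F i (z - γ • w) - F i z + w‖ ^ 2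
      ≤ (1 - γ * μ) * ‖w‖ ^ 2
        + (γ * ℓ - 1) / (γ * ℓ) * ((n : ℝ)⁻¹ * ∑ i, ‖F i (z - γ • w) - F i z‖ ^ 2) := by
  set S := (n : ℝ)⁻¹ * ∑ i, ‖F i (z - γ • w) - F i z‖ ^ 2
  set I := (n : ℝ)⁻¹ * ∑ i, (inner ℝ (F i (z - γ • w) - F i z) w : ℝ)
  have hI_co : I ≤ -(γ * ℓ)⁻¹ * S := by
    have h := mul_le_mul_of_nonneg_left
      (sum_le_sum fun i (_ : i ∈ univ) => (hco i).inner_sub_le hℓ hγ0 z w)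
      (inv_nonneg.mpr n.cast_nonneg : (0 : ℝ) ≤ (n : ℝ)⁻¹)
    rw [← mul_sum] at h
    linarith
  have hI_sm : I ≤ -(γ * μ) * ‖w‖ ^ 2 := by
    simpa only [I, inner_opAvg_sub] using hsm.inner_sub_le hγ0 z w
  have hcoef : (γ * ℓ - 1) / (γ * ℓ) = 1 - (γ * ℓ)⁻¹ := by
    field_simp
  rw [average_norm_add_sq (by omega), hcoef]
  linarith

/-- **One-step estimate with the residual term.** If each `F_i` is `ℓ`-cocoercive, the
average `F` is `μ`-strongly monotone and `γ > 0`, then one step of the SARAH recursion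
from iterate `z` with direction `w` (i.e. `z' = z - γw`, `v_i = F_i(z') - F_i(z) + w`)
satisfies
`(1/n) ∑_i ‖v_i‖² ≤ (1 - γμ)‖w‖² + ((γℓ - 1)/(γℓ)) (1/n) ∑_i ‖F_i(z') - F_i(z)‖²`. -/
theorem sarah_one_step_estimate {d n : ℕ} (hn : 1 ≤ n) (ℓ μ : ℝ) (hℓ : 0 < ℓ)
    (hμ : 0 < μ)
    (F : Fin n → EuclideanSpace ℝ (Fin d) → EuclideanSpace ℝ (Fin d))
    (hco : ∀ i, Cocoercive ℓ (F i)) (hsm : StronglyMonotone μ (opAvg F))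
    (γ : ℝ) (hγ0 : 0 < γ)
    (z w : EuclideanSpace ℝ (Fin d)) :
    (n : ℝ)⁻¹ * ∑ i, ‖F i (z - γ • w) - F i z + w‖ ^ 2
      ≤ (1 - γ * μ) * ‖w‖ ^ 2
        + (γ * ℓ - 1) / (γ * ℓ) * ((n : ℝ)⁻¹ * ∑ i, ‖F i (z - γ • w) - F i z‖ ^ 2) :=
  sarah_one_step_estimate_general hn ℓ μ hℓ F hco hsm γ hγ0 z w

end
end

section
/- Let G : ℝ^d → ℝ^d be an ℓ-cocoercive operator. Fix z, w ∈ ℝ^d and a stepsize γ > 0, set z' = z − γw and v = G(z') − G(z) + w. Then ‖v‖² ≤ ‖w‖² + ((γℓ − 2)/(γℓ)) · ‖v − w‖². -/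
open Finset

noncomputable section

theorem norm_add_sq_le_of_mul_inner_le {E : Type*} [NormedAddCommGroup E]
    [InnerProductSpace ℝ E] {c : ℝ} (hc : 0 < c) {x y : E}
    (h : c * inner ℝ x y ≤ -‖x‖ ^ 2) :
    ‖x + y‖ ^ 2 ≤ ‖y‖ ^ 2 + (c - 2) / c * ‖x‖ ^ 2 := by
  have hinner : inner ℝ x y ≤ -(‖x‖ ^ 2 / c) := by
    rw [le_neg, div_le_iff₀ hc]
    linarith
  calc ‖x + y‖ ^ 2 = ‖x‖ ^ 2 + 2 * inner ℝ x y + ‖y‖ ^ 2 := norm_add_sq_real x y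
    _ ≤ ‖x‖ ^ 2 - 2 * (‖x‖ ^ 2 / c) + ‖y‖ ^ 2 := by linarith
    _ = ‖y‖ ^ 2 + (c - 2) / c * ‖x‖ ^ 2 := by field_simp; ring

theorem Cocoercive.mul_inner_step_le {d : ℕ} {ℓ : ℝ}
    {G : EuclideanSpace ℝ (Fin d) → EuclideanSpace ℝ (Fin d)} (hco : Cocoercive ℓ G)
    (γ : ℝ) (z w : EuclideanSpace ℝ (Fin d)) :
    γ * ℓ * inner ℝ (G (z - γ • w) - G z) w ≤ -‖G (z - γ • w) - G z‖ ^ 2 := by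
  have h := hco (z - γ • w) z
  rw [sub_sub_cancel_left, inner_neg_right, real_inner_smul_right] at h
  linarith

/-- **Single-operator one-step bound.** If `G` is `ℓ`-cocoercive and `γ > 0`, then one
step of the SARAH recursion from iterate `z` with direction `w` (i.e. `z' = z - γw`,
`v = G(z') - G(z) + w`, so `v - w = G(z') - G(z)`) satisfies
`‖v‖² ≤ ‖w‖² + ((γℓ - 2)/(γℓ)) ‖v - w‖²`. -/
theorem sarah_single_step_bound {d : ℕ} (ℓ : ℝ) (hℓ : 0 < ℓ)
    (G : EuclideanSpace ℝ (Fin d) → EuclideanSpace ℝ (Fin d))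
    (hco : Cocoercive ℓ G)
    (γ : ℝ) (hγ0 : 0 < γ)
    (z w : EuclideanSpace ℝ (Fin d)) :
    ‖G (z - γ • w) - G z + w‖ ^ 2
      ≤ ‖w‖ ^ 2
        + (γ * ℓ - 2) / (γ * ℓ) * ‖(G (z - γ • w) - G z + w) - w‖ ^ 2 := by
  rw [add_sub_cancel_right]
  exact norm_add_sq_le_of_mul_inner_le (mul_pos hγ0 hℓ) (hco.mul_inner_step_le γ z w)

end
end

section
/- Let n ≥ 1 and let F_1, …, F_n : ℝ^d → ℝ^d be operators, each ℓ-cocoercive. Fix z, w ∈ ℝ^d and a stepsize γ with 0 < γ and γℓ < 2, set z' = z − γw, and for each i ∈ {1, …, n} set v_i = F_i(z') − F_i(z) + w. Then (1/n)∑_{i=1}^n ‖v_i − w‖² ≤ (γℓ/(2 − γℓ)) · (‖w‖² − (1/n)∑_{i=1}^n ‖v_i‖²). -/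
open Finset

noncomputable section

/-- Once `‖a + w‖²` is expanded, both sides differ by `2 (‖a‖² + γℓ ⟪a, w⟫)`, which the
hypothesis makes nonpositive. -/
theorem two_sub_mul_norm_sq_le_of_le_inner_neg_smul {E : Type*} [NormedAddCommGroup E]
    [InnerProductSpace ℝ E] {a w : E} {γ ℓ : ℝ}
    (h : ‖a‖ ^ 2 ≤ ℓ * inner ℝ a (-(γ • w))) :
    (2 - γ * ℓ) * ‖a‖ ^ 2 ≤ γ * ℓ * (‖w‖ ^ 2 - ‖a + w‖ ^ 2) := by
  rw [inner_neg_right, real_inner_smul_right] at h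
  rw [norm_add_sq_real]
  linarith

theorem Cocoercive.two_sub_mul_norm_sq_step_le {d : ℕ} {ℓ : ℝ}
    {G : EuclideanSpace ℝ (Fin d) → EuclideanSpace ℝ (Fin d)} (hG : Cocoercive ℓ G)
    (γ : ℝ) (z w : EuclideanSpace ℝ (Fin d)) :
    (2 - γ * ℓ) * ‖G (z - γ • w) - G z‖ ^ 2
      ≤ γ * ℓ * (‖w‖ ^ 2 - ‖G (z - γ • w) - G z + w‖ ^ 2) := by
  apply two_sub_mul_norm_sq_le_of_le_inner_neg_smul
  simpa only [sub_sub_cancel_left] using hG (z - γ • w) z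

theorem Finset.inv_card_mul_sum_le_div_mul_of_forall_mul_le {ι : Type*} {s : Finset ι}
    (hs : s.Nonempty) {x y : ι → ℝ} {k c W : ℝ} (hk : 0 < k)
    (h : ∀ i ∈ s, k * x i ≤ c * (W - y i)) :
    (#s : ℝ)⁻¹ * ∑ i ∈ s, x i ≤ c / k * (W - (#s : ℝ)⁻¹ * ∑ i ∈ s, y i) := by
  have hsum := sum_le_sum h
  rw [← mul_sum, ← mul_sum, sum_sub_distrib, sum_const, nsmul_eq_mul] at hsum
  have hcard : (0 : ℝ) < #s := by exact_mod_cast hs.card_pos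
  rw [div_mul_eq_mul_div, le_div_iff₀ hk]
  calc (#s : ℝ)⁻¹ * (∑ i ∈ s, x i) * k = (#s : ℝ)⁻¹ * (k * ∑ i ∈ s, x i) := by ring
    _ ≤ (#s : ℝ)⁻¹ * (c * (#s * W - ∑ i ∈ s, y i)) := by gcongr
    _ = c * (W - (#s : ℝ)⁻¹ * ∑ i ∈ s, y i) := by field_simp

theorem sarah_increment_bound_general {d n : ℕ} (hn : 1 ≤ n) (ℓ : ℝ)
    (F : Fin n → EuclideanSpace ℝ (Fin d) → EuclideanSpace ℝ (Fin d))
    (hco : ∀ i, Cocoercive ℓ (F i))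
    (γ : ℝ) (hγ : γ * ℓ < 2)
    (z w : EuclideanSpace ℝ (Fin d)) :
    (n : ℝ)⁻¹ * ∑ i, ‖(F i (z - γ • w) - F i z + w) - w‖ ^ 2
      ≤ γ * ℓ / (2 - γ * ℓ)
        * (‖w‖ ^ 2 - (n : ℝ)⁻¹ * ∑ i, ‖F i (z - γ • w) - F i z + w‖ ^ 2) := by
  have : Nonempty (Fin n) := Fin.pos_iff_nonempty.mp hn
  have hbound := inv_card_mul_sum_le_div_mul_of_forall_mul_le univ_nonempty
    (sub_pos.mpr hγ) fun i _ => (hco i).two_sub_mul_norm_sq_step_le γ z w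
  simpa only [add_sub_cancel_right, card_univ, Fintype.card_fin] using hbound

/-- **One-step increment bound.** If each `F_i` is `ℓ`-cocoercive and `0 < γ` with
`γℓ < 2`, then one step of the SARAH recursion from iterate `z` with direction `w`
(i.e. `z' = z - γw`, `v_i = F_i(z') - F_i(z) + w`, so `v_i - w = F_i(z') - F_i(z)`)
satisfies `(1/n) ∑_i ‖v_i - w‖² ≤ (γℓ/(2 - γℓ)) (‖w‖² - (1/n) ∑_i ‖v_i‖²)`. -/
theorem sarah_increment_bound {d n : ℕ} (hn : 1 ≤ n) (ℓ : ℝ) (hℓ : 0 < ℓ)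
    (F : Fin n → EuclideanSpace ℝ (Fin d) → EuclideanSpace ℝ (Fin d))
    (hco : ∀ i, Cocoercive ℓ (F i))
    (γ : ℝ) (hγ0 : 0 < γ) (hγ : γ * ℓ < 2)
    (z w : EuclideanSpace ℝ (Fin d)) :
    (n : ℝ)⁻¹ * ∑ i, ‖(F i (z - γ • w) - F i z + w) - w‖ ^ 2
      ≤ γ * ℓ / (2 - γ * ℓ)
        * (‖w‖ ^ 2 - (n : ℝ)⁻¹ * ∑ i, ‖F i (z - γ • w) - F i z + w‖ ^ 2) :=
  sarah_increment_bound_general hn ℓ F hco γ hγ z w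

end
end

section
/- Let n ≥ 1 and let F_1, …, F_n : ℝ^d → ℝ^d be operators with average F = (1/n)∑_{i=1}^n F_i. Suppose each F_i is ℓ-cocoercive, F is μ-strongly monotone, and the stepsize satisfies 0 < γ ≤ 1/ℓ. Then for every k ∈ {1, …, K}, the SARAH inner-loop trajectory satisfies 𝔼[‖v^k‖²] ≤ (1 − γμ) · 𝔼[‖v^{k−1}‖²]. -/
open Finset

noncomputable section

/-! The SARAH estimator moves by `v' = Δᵢ + v` with `Δᵢ = Fᵢ(z - γv) - Fᵢ(z)`. Cocoercivity of `Fᵢ`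
along the step `-γv` gives `‖Δᵢ‖² ≤ -γℓ⟪Δᵢ, v⟫`, hence `‖v'‖² ≤ (2 - γℓ)⟪Δᵢ, v⟫ + ‖v‖²`.
Averaging over `i` turns `⟪Δᵢ, v⟫` into `⟪F(z - γv) - F(z), v⟫ ≤ -γμ‖v‖²` by strong monotonicity
of `F`, and since this is nonpositive and `2 - γℓ ≥ 1`, the average of `‖v'‖²` is at most
`(1 - γμ)‖v‖²`. In the expectation over index sequences, `v^{k-1}` does not depend on `i_k`, so
averaging over `i_k` first yields the claim. -/

theorem Fintype.sum_sum_update_eq_card_smul {ι α M : Type*} [Fintype ι] [DecidableEq ι]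
    [Fintype α] [AddCommMonoid M] (i : ι) (f : (ι → α) → M) :
    ∑ j, ∑ a, f (Function.update j i a) = Fintype.card α • ∑ j, f j := by
  set e := Equiv.funSplitAt i α
  have hupd : ∀ a b g, Function.update (e.symm (b, g)) i a = e.symm (a, g) := by
    intro a b g
    ext t
    by_cases ht : t = i
    · subst ht; simp [e, Equiv.funSplitAt, Equiv.piSplitAt]
    · simp [e, Equiv.funSplitAt, Equiv.piSplitAt, ht]
  rw [← e.symm.sum_comp, ← e.symm.sum_comp, Fintype.sum_prod_type, Fintype.sum_prod_type]
  simp only [hupd]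
  rw [Finset.sum_const, Finset.card_univ, Finset.sum_comm]

section

variable {d n : ℕ} {F : Fin n → EuclideanSpace ℝ (Fin d) → EuclideanSpace ℝ (Fin d)}
  {γ : ℝ}

theorem natCast_smul_opAvg (z : EuclideanSpace ℝ (Fin d)) :
    (n : ℝ) • opAvg F z = ∑ i, F i z := by
  rcases Nat.eq_zero_or_pos n with rfl | hn
  · simp
  · exact smul_inv_smul₀ (by positivity) _

theorem StronglyMonotone.inner_sub_smul_le {μ : ℝ}
    {G : EuclideanSpace ℝ (Fin d) → EuclideanSpace ℝ (Fin d)} (hG : StronglyMonotone μ G)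
    (hγ : 0 < γ) (z v : EuclideanSpace ℝ (Fin d)) :
    inner ℝ (G (z - γ • v) - G z) v ≤ -(γ * μ) * ‖v‖ ^ 2 := by
  have h := hG (z - γ • v) z
  rw [sub_sub_cancel_left, norm_neg, norm_smul, inner_neg_right, real_inner_smul_right,
    Real.norm_of_nonneg hγ.le] at h
  nlinarith

theorem Cocoercive.norm_sub_smul_add_sq_le {ℓ : ℝ}
    {G : EuclideanSpace ℝ (Fin d) → EuclideanSpace ℝ (Fin d)} (hG : Cocoercive ℓ G)
    (z v : EuclideanSpace ℝ (Fin d)) :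
    ‖G (z - γ • v) - G z + v‖ ^ 2 ≤ (2 - γ * ℓ) * inner ℝ (G (z - γ • v) - G z) v + ‖v‖ ^ 2 := by
  have h := hG (z - γ • v) z
  rw [sub_sub_cancel_left, inner_neg_right, real_inner_smul_right] at h
  rw [norm_add_sq_real]
  nlinarith

theorem sum_inner_sub_eq_natCast_mul_inner_opAvg (z z' v : EuclideanSpace ℝ (Fin d)) :
    ∑ i, inner ℝ (F i z' - F i z) v = (n : ℝ) * inner ℝ (opAvg F z' - opAvg F z) v := by
  rw [← real_inner_smul_left, smul_sub, natCast_smul_opAvg, natCast_smul_opAvg,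
    ← Finset.sum_sub_distrib, sum_inner]

theorem sum_norm_sarahStep_snd_sq_le {ℓ μ : ℝ} (hℓ : 0 < ℓ) (hμ : 0 < μ)
    (hco : ∀ i, Cocoercive ℓ (F i)) (hsm : StronglyMonotone μ (opAvg F))
    (hγ0 : 0 < γ) (hγ : γ ≤ 1 / ℓ) (p : EuclideanSpace ℝ (Fin d) × EuclideanSpace ℝ (Fin d)) :
    ∑ i, ‖(sarahStep γ F i p).2‖ ^ 2 ≤ n * ((1 - γ * μ) * ‖p.2‖ ^ 2) := by
  obtain ⟨z, v⟩ := p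
  set W := inner ℝ (opAvg F (z - γ • v) - opAvg F z) v
  have hW : W ≤ -(γ * μ) * ‖v‖ ^ 2 := hsm.inner_sub_smul_le hγ0 z v
  have hW0 : W ≤ 0 := hW.trans (by nlinarith [mul_pos hγ0 hμ, sq_nonneg ‖v‖])
  have hγℓ : γ * ℓ ≤ 1 := by rwa [le_div_iff₀ hℓ] at hγ
  have hn0 : (0 : ℝ) ≤ n := n.cast_nonneg
  calc ∑ i, ‖(sarahStep γ F i (z, v)).2‖ ^ 2
      ≤ ∑ i, ((2 - γ * ℓ) * inner ℝ (F i (z - γ • v) - F i z) v + ‖v‖ ^ 2) :=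
        sum_le_sum fun i _ => (hco i).norm_sub_smul_add_sq_le z v
    _ = (2 - γ * ℓ) * (n * W) + n * ‖v‖ ^ 2 := by
        rw [sum_add_distrib, ← mul_sum, sum_inner_sub_eq_natCast_mul_inner_opAvg, sum_const,
          card_univ, Fintype.card_fin, nsmul_eq_mul]
    _ ≤ n * W + n * ‖v‖ ^ 2 := by
        nlinarith [mul_nonpos_of_nonneg_of_nonpos (sub_nonneg.2 hγℓ)
          (mul_nonpos_of_nonneg_of_nonpos hn0 hW0)]
    _ ≤ n * (-(γ * μ) * ‖v‖ ^ 2) + n * ‖v‖ ^ 2 := by gcongr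
    _ = n * ((1 - γ * μ) * ‖v‖ ^ 2) := by ring

end

section

variable {d n K : ℕ} (γ : ℝ) (F : Fin n → EuclideanSpace ℝ (Fin d) → EuclideanSpace ℝ (Fin d))
  (z0 : EuclideanSpace ℝ (Fin d)) (j : Fin K → Fin n)

theorem sarahRun_append_singleton (p : EuclideanSpace ℝ (Fin d) × EuclideanSpace ℝ (Fin d))
    (l : List (Fin n)) (i : Fin n) :
    sarahRun γ F p (l ++ [i]) = sarahStep γ F i (sarahRun γ F p l) := by
  induction l generalizing p with
  | nil => rfl
  | cons a l ih => exact ih _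

theorem sarahTraj_succ (m : ℕ) (hm : m < K) :
    sarahTraj γ F z0 j (m + 1) = sarahStep γ F (j ⟨m, hm⟩) (sarahTraj γ F z0 j m) := by
  have hjm : (List.ofFn j)[m]? = some (j ⟨m, hm⟩) := by simp [hm]
  rw [sarahTraj, List.take_add_one, hjm]
  exact sarahRun_append_singleton γ F _ _ _

theorem sarahTraj_update_of_le {m : ℕ} {t : Fin K} (hmt : m ≤ t) (a : Fin n) :
    sarahTraj γ F z0 (Function.update j t a) m = sarahTraj γ F z0 j m := by
  rw [sarahTraj, sarahTraj]
  congr 1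
  refine List.ext_getElem (by simp) fun s hs _ => ?_
  simp only [List.length_take, List.length_ofFn, lt_min_iff] at hs
  simp only [List.getElem_take, List.getElem_ofFn]
  exact Function.update_of_ne (Fin.ne_of_val_ne (by simp only; omega)) _ _

theorem sarahTraj_update_succ {m : ℕ} (hm : m < K) (a : Fin n) :
    sarahTraj γ F z0 (Function.update j ⟨m, hm⟩ a) (m + 1)
      = sarahStep γ F a (sarahTraj γ F z0 j m) := by
  rw [sarahTraj_succ γ F z0 _ m hm, sarahTraj_update_of_le _ _ _ _ le_rfl, Function.update_self]

end

theorem sum_norm_sarahTraj_succ_sq_le {d n K : ℕ} (hn : 1 ≤ n) {ℓ μ : ℝ} (hℓ : 0 < ℓ)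
    (hμ : 0 < μ) {F : Fin n → EuclideanSpace ℝ (Fin d) → EuclideanSpace ℝ (Fin d)}
    (hco : ∀ i, Cocoercive ℓ (F i)) (hsm : StronglyMonotone μ (opAvg F))
    {γ : ℝ} (hγ0 : 0 < γ) (hγ : γ ≤ 1 / ℓ) (z0 : EuclideanSpace ℝ (Fin d)) {m : ℕ} (hm : m < K) :
    ∑ j : Fin K → Fin n, ‖(sarahTraj γ F z0 j (m + 1)).2‖ ^ 2
      ≤ (1 - γ * μ) * ∑ j : Fin K → Fin n, ‖(sarahTraj γ F z0 j m).2‖ ^ 2 := by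
  have hn0 : (0 : ℝ) < n := by exact_mod_cast hn
  refine le_of_mul_le_mul_left ?_ hn0
  calc (n : ℝ) * ∑ j : Fin K → Fin n, ‖(sarahTraj γ F z0 j (m + 1)).2‖ ^ 2
      = ∑ j : Fin K → Fin n, ∑ a,
          ‖(sarahTraj γ F z0 (Function.update j ⟨m, hm⟩ a) (m + 1)).2‖ ^ 2 := by
        rw [Fintype.sum_sum_update_eq_card_smul ⟨m, hm⟩
          (fun j => ‖(sarahTraj γ F z0 j (m + 1)).2‖ ^ 2), Fintype.card_fin, nsmul_eq_mul]
    _ = ∑ j : Fin K → Fin n, ∑ a, ‖(sarahStep γ F a (sarahTraj γ F z0 j m)).2‖ ^ 2 := by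
        simp only [sarahTraj_update_succ]
    _ ≤ ∑ j : Fin K → Fin n, n * ((1 - γ * μ) * ‖(sarahTraj γ F z0 j m).2‖ ^ 2) :=
        sum_le_sum fun j _ => sum_norm_sarahStep_snd_sq_le hℓ hμ hco hsm hγ0 hγ _
    _ = n * ((1 - γ * μ) * ∑ j : Fin K → Fin n, ‖(sarahTraj γ F z0 j m).2‖ ^ 2) := by
        rw [← mul_sum, ← mul_sum]

theorem sarah_vk_step_bound_general {d n : ℕ} (hn : 1 ≤ n) (ℓ μ : ℝ) (hℓ : 0 < ℓ) (hμ : 0 < μ)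
    (F : Fin n → EuclideanSpace ℝ (Fin d) → EuclideanSpace ℝ (Fin d))
    (hco : ∀ i, Cocoercive ℓ (F i)) (hsm : StronglyMonotone μ (opAvg F))
    (γ : ℝ) (hγ0 : 0 < γ) (hγ : γ ≤ 1 / ℓ)
    (K : ℕ) (z0 : EuclideanSpace ℝ (Fin d))
    (k : ℕ) (hk1 : 1 ≤ k) (hkK : k ≤ K) :
    (∑ j : Fin K → Fin n, ‖(sarahTraj γ F z0 j k).2‖ ^ 2) / (n : ℝ) ^ K
      ≤ (1 - γ * μ)
        * ((∑ j : Fin K → Fin n, ‖(sarahTraj γ F z0 j (k - 1)).2‖ ^ 2) / (n : ℝ) ^ K) := by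
  obtain ⟨m, rfl⟩ : ∃ m, k = m + 1 := ⟨k - 1, by omega⟩
  rw [← mul_div_assoc, Nat.add_sub_cancel]
  exact div_le_div_of_nonneg_right
    (sum_norm_sarahTraj_succ_sq_le hn hℓ hμ hco hsm hγ0 hγ z0 (by omega)) (by positivity)

/-- **Lemma 1 (per-step form).** If each `F_i` is `ℓ`-cocoercive, the average `F` is
`μ`-strongly monotone and `0 < γ ≤ 1/ℓ`, then for every `k ∈ {1, …, K}` the SARAH
inner loop satisfies `𝔼[‖v^k‖²] ≤ (1 - γμ) 𝔼[‖v^{k-1}‖²]`, where the expectation is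
the uniform average over all `n^K` index sequences. -/
theorem sarah_vk_step_bound {d n : ℕ} (hn : 1 ≤ n) (ℓ μ : ℝ) (hℓ : 0 < ℓ) (hμ : 0 < μ)
    (F : Fin n → EuclideanSpace ℝ (Fin d) → EuclideanSpace ℝ (Fin d))
    (hco : ∀ i, Cocoercive ℓ (F i)) (hsm : StronglyMonotone μ (opAvg F))
    (γ : ℝ) (hγ0 : 0 < γ) (hγ : γ ≤ 1 / ℓ)
    (K : ℕ) (hK : 1 ≤ K) (z0 : EuclideanSpace ℝ (Fin d))
    (k : ℕ) (hk1 : 1 ≤ k) (hkK : k ≤ K) :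
    (∑ j : Fin K → Fin n, ‖(sarahTraj γ F z0 j k).2‖ ^ 2) / (n : ℝ) ^ K
      ≤ (1 - γ * μ)
        * ((∑ j : Fin K → Fin n, ‖(sarahTraj γ F z0 j (k - 1)).2‖ ^ 2) / (n : ℝ) ^ K) :=
  sarah_vk_step_bound_general hn ℓ μ hℓ hμ F hco hsm γ hγ0 hγ K z0 k hk1 hkK

end
end
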